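/- The algebra ℚ(λ₀,…,λ_n)[P]/((P−λ₀)⋯(P−λ_n) − Q) over the field ℚ(λ₀,…,λ_n)(Q) (with Q transcendental), i.e. the small equivariant quantum cohomology of ℂP^n, is semisimple: it is isomorphic to a product of field extensions; equivalently, the polynomial (P−λ₀)⋯(P−λ_n) − Q is separable over ℚ(λ₀,…,λ_n, Q). -/

import Mathlib

open Polynomial

/-!
A multiple root `α` of `f - t` is a root of `f'`; if `f' ≠ 0` has coefficients in a field `K`,
then `α` is algebraic over `K`, and so is `t = f(α)`. Hence `f - t` is separable whenever `t`
is transcendental over `K`. Here `K = ℚ(λ₀,…,λ_n)`, `t = Q`, and `f = ∏ (X - λᵢ)` has nonzero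
derivative in characteristic zero.
-/

theorem Polynomial.separable_map_sub_C_of_transcendental {K L : Type*} [Field K] [Field L]
    [Algebra K L] {f : K[X]} (hf : derivative f ≠ 0) {t : L} (ht : Transcendental K t) :
    (f.map (algebraMap K L) - C t).Separable := by
  refine (isCoprime_iff_aeval_ne_zero_of_isAlgClosed L (AlgebraicClosure L) _ _).mpr fun a ↦ ?_
  by_contra! ⟨hroot, hcrit⟩
  have ha : IsAlgebraic K a := ⟨derivative f, hf, by simpa [derivative_map] using hcrit⟩
  have ht_eq : algebraMap L (AlgebraicClosure L) t = aeval a f := by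
    rw [map_sub, aeval_map_algebraMap, aeval_C, sub_eq_zero] at hroot
    exact hroot.symm
  apply ht
  rw [← isAlgebraic_algebraMap_iff (algebraMap L (AlgebraicClosure L)).injective, ht_eq]
  by_contra hfa
  exact (transcendental_aeval_iff.mp hfa).1 ha

theorem MvPolynomial.algebraicIndependent_algebraMap_X {σ R A : Type*} [CommRing R] [CommRing A]
    [Algebra R A] [Algebra (MvPolynomial σ R) A] [IsScalarTower R (MvPolynomial σ R) A]
    (h : Function.Injective (algebraMap (MvPolynomial σ R) A)) :
    AlgebraicIndependent R fun i ↦ algebraMap (MvPolynomial σ R) A (X i) :=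
  (algebraicIndependent_X σ R).map' (f := IsScalarTower.toAlgHom R (MvPolynomial σ R) A) h

/-- The small equivariant quantum cohomology of `ℂPⁿ`,
`ℚ(λ₀,…,λ_n,Q)[P]/((P-λ₀)⋯(P-λ_n) - Q)` with `λ₀,…,λ_n, Q` independent
transcendentals, is semisimple: equivalently, the polynomial
`(P-λ₀)⋯(P-λ_n) - Q` is separable over `ℚ(λ₀,…,λ_n,Q)`. -/
theorem quantum_cohomology_CPn_separable (n : ℕ) :
    let F := FractionRing (MvPolynomial (Option (Fin (n + 1))) ℚ)
    let lam : Fin (n + 1) → F := fun i =>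
      algebraMap (MvPolynomial (Option (Fin (n + 1))) ℚ) F (MvPolynomial.X (some i))
    let Qv : F :=
      algebraMap (MvPolynomial (Option (Fin (n + 1))) ℚ) F (MvPolynomial.X none)
    ((∏ i : Fin (n + 1), (X - C (lam i))) - C Qv).Separable := by
  intro F lam Qv
  have hind : AlgebraicIndependent ℚ fun o : Option (Fin (n + 1)) ↦ o.elim Qv lam := by
    have hX := MvPolynomial.algebraicIndependent_algebraMap_X (σ := Option (Fin (n + 1)))
      (R := ℚ) (A := F) (IsFractionRing.injective _ _)
    convert hX with o
    cases o <;> rfl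
  let K := IntermediateField.adjoin ℚ (Set.range lam)
  have hQv : Transcendental K Qv :=
    IntermediateField.transcendental_adjoin_iff.mpr (AlgebraicIndependent.option_iff.mp hind).2
  let f : K[X] := ∏ i, (X - C ⟨lam i, IntermediateField.subset_adjoin _ _ ⟨i, rfl⟩⟩)
  have hf : derivative f ≠ 0 := by
    rw [derivative_ne_zero, natDegree_finsetProd_X_sub_C_eq_card]
    simp
  simpa [f, Polynomial.map_prod] using separable_map_sub_C_of_transcendental hf hQv
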